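/- Let F be a field, q ∈ F, and s, t ≥ 1 natural numbers with q + 1 ≠ 0, q²(s−1)(t−1) − 1 ≠ 0, and (q+1)²(s−1)(t−1) ≠ s·t in F. Then the q-distance matrix D of K_{s,t} is invertible and D⁻¹ = −L + λ⁻¹·x·xᵀ, where L, x and λ are as defined in the context and x·xᵀ is the rank-one matrix with (u,v)-entry x(u)·x(v). -/

import Mathlib

/-- The `q`-distance matrix of the complete bipartite graph `K_{s,t}`,
indexed by `Fin s ⊕ Fin t`: diagonal entries are `0`, entries between the two
parts are `1`, and off-diagonal entries within a part are `q + 1`. -/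
def qDistKst (F : Type*) [Field F] (q : F) (s t : ℕ) :
    Matrix (Fin s ⊕ Fin t) (Fin s ⊕ Fin t) F :=
  Matrix.of fun u v =>
    if u = v then 0 else if u.isLeft = v.isLeft then q + 1 else 1

/-- The special vector `x` of `K_{s,t}`. -/
def xVecKst (F : Type*) [Field F] (q : F) (s t : ℕ) :
    Fin s ⊕ Fin t → F :=
  Sum.elim
    (fun _ => (q * ((t : F) - 1) - 1) /
      ((q + 1) * (q ^ 2 * ((s : F) - 1) * ((t : F) - 1) - 1)))
    (fun _ => (q * ((s : F) - 1) - 1) /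
      ((q + 1) * (q ^ 2 * ((s : F) - 1) * ((t : F) - 1) - 1)))

/-- The scalar `λ` of `K_{s,t}`. -/
def lamKst (F : Type*) [Field F] (q : F) (s t : ℕ) : F :=
  ((q + 1) ^ 2 * ((s : F) - 1) * ((t : F) - 1) - (s : F) * (t : F)) /
    ((q + 1) * (q ^ 2 * ((s : F) - 1) * ((t : F) - 1) - 1))

/-- The matrix `C` in the definition of the Laplacian-like matrix `ℒ` of
`K_{s,t}`. -/
def cMatKst (F : Type*) [Field F] (q : F) (s t : ℕ) :
    Matrix (Fin s ⊕ Fin t) (Fin s ⊕ Fin t) F :=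
  Matrix.of fun u v =>
    match u, v with
    | Sum.inl _, Sum.inl _ => -q ^ 2 * ((t : F) - 1)
    | Sum.inr _, Sum.inr _ => -q ^ 2 * ((s : F) - 1)
    | _, _ => q

/-- The Laplacian-like matrix `ℒ` of `K_{s,t}`. -/
def lapKst (F : Type*) [Field F] (q : F) (s t : ℕ) :
    Matrix (Fin s ⊕ Fin t) (Fin s ⊕ Fin t) F :=
  (1 / ((q + 1) * (q ^ 2 * ((s : F) - 1) * ((t : F) - 1) - 1))) • cMatKst F q s t
    + (1 / (q + 1)) • (1 : Matrix (Fin s ⊕ Fin t) (Fin s ⊕ Fin t) F)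


/-!
Both `D` and the claimed inverse `M` are of the form `B - c • 1` with `B` constant on each of
the four blocks of `(Fin s ⊕ Fin t)²`: `D = B - (q + 1) • 1` and `M = B' - (q + 1)⁻¹ • 1`.
Block-constant matrices multiply like `2 × 2` matrices whose inner sums are weighted by the part
sizes `s` and `t`, so `D * M = 1` reduces to `B * B' = (q + 1)⁻¹ • B + (q + 1) • B'`, that is, to
four scalar identities.
-/

namespace Matrix

variable {m n R : Type*}

def blockConst (a b c d : R) : Matrix (m ⊕ n) (m ⊕ n) R :=
  of fun u v =>
    match u, v with
    | .inl _, .inl _ => a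
    | .inl _, .inr _ => b
    | .inr _, .inl _ => c
    | .inr _, .inr _ => d

theorem blockConst_mul [Fintype m] [Fintype n] [Semiring R] (a b c d a' b' c' d' : R) :
    (blockConst a b c d : Matrix (m ⊕ n) (m ⊕ n) R) * blockConst a' b' c' d' =
      blockConst
        (Fintype.card m * (a * a') + Fintype.card n * (b * c'))
        (Fintype.card m * (a * b') + Fintype.card n * (b * d'))
        (Fintype.card m * (c * a') + Fintype.card n * (d * c'))
        (Fintype.card m * (c * b') + Fintype.card n * (d * d')) := by
  ext (u | u) (v | v) <;>
    simp [blockConst, mul_apply, Fintype.sum_sum_type, nsmul_eq_mul]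

theorem smul_blockConst {S : Type*} [SMul S R] (r : S) (a b c d : R) :
    r • (blockConst a b c d : Matrix (m ⊕ n) (m ⊕ n) R) =
      blockConst (r • a) (r • b) (r • c) (r • d) := by
  ext (u | u) (v | v) <;> rfl

theorem blockConst_add [Add R] (a b c d a' b' c' d' : R) :
    (blockConst a b c d : Matrix (m ⊕ n) (m ⊕ n) R) + blockConst a' b' c' d' =
      blockConst (a + a') (b + b') (c + c') (d + d') := by
  ext (u | u) (v | v) <;> rfl

theorem neg_blockConst [Neg R] (a b c d : R) :
    -(blockConst a b c d : Matrix (m ⊕ n) (m ⊕ n) R) = blockConst (-a) (-b) (-c) (-d) := by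
  ext (u | u) (v | v) <;> rfl

theorem vecMulVec_sumElim_const [Mul R] (a b c d : R) :
    vecMulVec (Sum.elim (fun _ : m => a) fun _ : n => b) (Sum.elim (fun _ => c) fun _ => d) =
      blockConst (a * c) (a * d) (b * c) (b * d) := by
  ext (u | u) (v | v) <;> rfl

end Matrix

theorem sub_smul_one_mul_sub_inv_smul_one_eq_one {K A : Type*} [Field K] [Ring A] [Algebra K A]
    {c : K} (hc : c ≠ 0) {B B' : A} (h : B * B' = c⁻¹ • B + c • B') :
    (B - c • 1) * (B' - c⁻¹ • 1) = 1 := by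
  rw [sub_mul, mul_sub, mul_sub, h, smul_mul_assoc, one_mul, mul_smul_comm, mul_one,
    smul_mul_smul_comm, mul_inv_cancel₀ hc, one_smul, one_mul]
  abel

open Matrix

section

variable {F : Type*} [Field F] {q N : F} {s t : ℕ}

theorem qDistKst_eq_blockConst_sub :
    qDistKst F q s t = blockConst (q + 1) 1 1 (q + 1) - (q + 1) • 1 := by
  ext (u | u) (v | v) <;> simp [qDistKst, blockConst, one_apply] <;> split_ifs <;> simp

theorem cMatKst_eq_blockConst :
    cMatKst F q s t = blockConst (-q ^ 2 * ((t : F) - 1)) q q (-q ^ 2 * ((s : F) - 1)) := by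
  ext (u | u) (v | v) <;> rfl

variable (F q N s t) in
def kstInvBlock : Matrix (Fin s ⊕ Fin t) (Fin s ⊕ Fin t) F :=
  blockConst ((q * (q + 2) * ((t : F) - 1) - 1) / ((q + 1) * N)) (-N⁻¹) (-N⁻¹)
    ((q * (q + 2) * ((s : F) - 1) - 1) / ((q + 1) * N))

theorem neg_lapKst_add_smul_vecMulVec_eq (hq : q + 1 ≠ 0)
    (hΔ : q ^ 2 * ((s : F) - 1) * ((t : F) - 1) - 1 ≠ 0)
    (hN : (q + 1) ^ 2 * ((s : F) - 1) * ((t : F) - 1) - s * t = N) (hN₀ : N ≠ 0) :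
    -lapKst F q s t + (lamKst F q s t)⁻¹ • vecMulVec (xVecKst F q s t) (xVecKst F q s t) =
      kstInvBlock F q N s t - (q + 1)⁻¹ • 1 := by
  subst hN
  rw [lapKst, cMatKst_eq_blockConst, xVecKst, vecMulVec_sumElim_const, smul_blockConst,
    smul_blockConst, neg_add, neg_blockConst, add_right_comm, blockConst_add, ← sub_eq_add_neg,
    kstInvBlock]
  congr 2 <;> simp only [lamKst, smul_eq_mul, one_div] <;> field_simp <;> ring

theorem blockConst_mul_kstInvBlock (hq : q + 1 ≠ 0)
    (hN : (q + 1) ^ 2 * ((s : F) - 1) * ((t : F) - 1) - s * t = N) (hN₀ : N ≠ 0) :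
    blockConst (q + 1) 1 1 (q + 1) * kstInvBlock F q N s t =
      (q + 1)⁻¹ • blockConst (q + 1) 1 1 (q + 1) + (q + 1) • kstInvBlock F q N s t := by
  rw [kstInvBlock, blockConst_mul, smul_blockConst, smul_blockConst, blockConst_add,
    Fintype.card_fin, Fintype.card_fin]
  congr 1 <;> simp only [smul_eq_mul] <;> field_simp <;> linear_combination hN

end

theorem qDist_inv_eq_neg_lap_add_rankOne_general (F : Type*) [Field F] (q : F)
    (s t : ℕ) (hq : q + 1 ≠ 0)
    (hΔ : q ^ 2 * ((s : F) - 1) * ((t : F) - 1) - 1 ≠ 0)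
    (hst : (q + 1) ^ 2 * ((s : F) - 1) * ((t : F) - 1) ≠ (s : F) * (t : F)) :
    IsUnit (qDistKst F q s t).det ∧
      (qDistKst F q s t)⁻¹ = -lapKst F q s t +
        (lamKst F q s t)⁻¹ • Matrix.of (fun u v => xVecKst F q s t u * xVecKst F q s t v) := by
  have hN₀ := sub_ne_zero.mpr hst
  have hDM : qDistKst F q s t *
      (-lapKst F q s t + (lamKst F q s t)⁻¹ • vecMulVec (xVecKst F q s t) (xVecKst F q s t)) =
        1 := by
    rw [qDistKst_eq_blockConst_sub, neg_lapKst_add_smul_vecMulVec_eq hq hΔ rfl hN₀]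
    exact sub_smul_one_mul_sub_inv_smul_one_eq_one hq (blockConst_mul_kstInvBlock hq rfl hN₀)
  exact ⟨isUnit_det_of_right_inverse hDM, inv_eq_right_inv hDM⟩

theorem qDist_inv_eq_neg_lap_add_rankOne (F : Type*) [Field F] (q : F)
    (s t : ℕ) (hs : 1 ≤ s) (ht : 1 ≤ t) (hq : q + 1 ≠ 0)
    (hΔ : q ^ 2 * ((s : F) - 1) * ((t : F) - 1) - 1 ≠ 0)
    (hst : (q + 1) ^ 2 * ((s : F) - 1) * ((t : F) - 1) ≠ (s : F) * (t : F)) :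
    IsUnit (qDistKst F q s t).det ∧
      (qDistKst F q s t)⁻¹ = -lapKst F q s t +
        (lamKst F q s t)⁻¹ • Matrix.of (fun u v => xVecKst F q s t u * xVecKst F q s t v) :=
  qDist_inv_eq_neg_lap_add_rankOne_general F q s t hq hΔ hst
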